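/- If A and B are two closed unbounded subsets of the long ray 𝕃₊, then A ∩ B ≠ ∅. -/

import Mathlib

noncomputable section

open Set Topology Filter

universe u

/-! ### The long ray and the long line -/

/-- The first uncountable ordinal `ω₁`, viewed as the linearly ordered set of all
countable ordinals. -/
def Omega1 : Type 1 := {o : Ordinal.{0} // o < (Cardinal.aleph 1).ord}

instance : LinearOrder Omega1 :=
  inferInstanceAs (LinearOrder {o : Ordinal.{0} // o < (Cardinal.aleph 1).ord})

/-- `ω₁` carries the order topology. -/
instance : TopologicalSpace Omega1 := Preorder.topology Omega1

instance : OrderTopology Omega1 := ⟨rfl⟩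

/-- The underlying countable ordinal of an element of `ω₁`. -/
def Omega1.toOrdinal : Omega1 → Ordinal.{0} := Subtype.val

/-- The closed long ray `𝕃≥0`: the set `ω₁ × [0,1)` with the lexicographic order and the
order topology. -/
def ClosedLongRay : Type 1 := Omega1 ×ₗ (Set.Ico (0:ℝ) 1)

instance : LinearOrder ClosedLongRay :=
  inferInstanceAs (LinearOrder (Omega1 ×ₗ (Set.Ico (0:ℝ) 1)))

instance : TopologicalSpace ClosedLongRay := Preorder.topology ClosedLongRay

instance : OrderTopology ClosedLongRay := ⟨rfl⟩

/-- The long ray `𝕃₊`: the closed long ray with its least element removed, with the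
subspace topology (an element is non-minimal iff something is below it). -/
def LongRay : Type 1 := {x : ClosedLongRay // ∃ y, y < x}

instance : LinearOrder LongRay :=
  inferInstanceAs (LinearOrder {x : ClosedLongRay // ∃ y, y < x})

instance : TopologicalSpace LongRay :=
  inferInstanceAs (TopologicalSpace {x : ClosedLongRay // ∃ y, y < x})

/-- The inclusion of the long ray into the closed long ray. -/
def LongRay.toCLR : LongRay → ClosedLongRay := Subtype.val

/-- The long line `𝕃`: an order-reversed copy of `𝕃₊` placed below the closed long ray
`𝕃≥0`, with the order topology. -/
def LongLine : Type 1 := (OrderDual LongRay) ⊕ₗ ClosedLongRay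

instance : LinearOrder LongLine :=
  inferInstanceAs (LinearOrder ((OrderDual LongRay) ⊕ₗ ClosedLongRay))

instance : TopologicalSpace LongLine := Preorder.topology LongLine

instance : OrderTopology LongLine := ⟨rfl⟩

/-- The identification of `𝕃₊` with the set of positive elements of `𝕃`. -/
def LongRay.inL (a : LongRay) : LongLine := toLex (Sum.inr a.toCLR)

/-- The natural order-reversing involution `x ↦ -x` of the long line, exchanging the two
copies of `𝕃₊` and fixing the least element `0` of `𝕃≥0`. -/
noncomputable def LongLine.neg (x : LongLine) : LongLine :=
  match ofLex x with
  | Sum.inl a => toLex (Sum.inr (OrderDual.ofDual a).toCLR)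
  | Sum.inr b =>
      @dite _ (∃ y, y < b) (Classical.dec _)
        (fun h => toLex (Sum.inl (OrderDual.toDual (⟨b, h⟩ : LongRay))))
        (fun _ => x)

/-- A subset of the long ray is a *club* if it is closed (in the topology of `𝕃₊`) and
unbounded (i.e. cofinal). -/
def ClubInLongRay (C : Set LongRay) : Prop :=
  IsClosed C ∧ ∀ β : LongRay, ∃ α ∈ C, β ≤ α

/-- A topological space `X` is *squat* if every continuous map `𝕃₊ → X` is eventually
constant. -/
def Squat (X : Type*) [TopologicalSpace X] : Prop :=
  ∀ f : LongRay → X, Continuous f → ∃ (β : LongRay) (x : X), ∀ α, β ≤ α → f α = x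

/-! ### Manifolds and foliations -/

/-- A (topological) `n`-manifold: a nonempty Hausdorff space in which every point has an
open neighbourhood homeomorphic to `ℝⁿ`. -/
def IsTopManifold (M : Type u) [TopologicalSpace M] (n : ℕ) : Prop :=
  Nonempty M ∧ T2Space M ∧
    ∀ x : M, ∃ U : Set M, x ∈ U ∧ IsOpen U ∧ Nonempty (U ≃ₜ (Fin n → ℝ))

/-- A foliation of dimension `p` and codimension `q` on a space `M`: a family of charts
`φᵢ : Uᵢ ≃ₜ ℝᵖ × ℝ^q` on open sets covering `M` such that all coordinate transformations
have the form `(x, y) ↦ (g (x, y), h y)`, i.e. the last `q` coordinates of the image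
depend only on the last `q` coordinates of the argument. -/
structure Foliation (M : Type u) [TopologicalSpace M] (p q : ℕ) where
  /-- index type of the atlas -/
  ι : Type u
  /-- chart domains -/
  U : ι → Set M
  /-- the charts -/
  chart : (i : ι) → ((U i) ≃ₜ ((Fin p → ℝ) × (Fin q → ℝ)))
  isOpen : ∀ i, IsOpen (U i)
  covers : ∀ x : M, ∃ i, x ∈ U i
  compat : ∀ i j (x y : M) (hxi : x ∈ U i) (hxj : x ∈ U j) (hyi : y ∈ U i) (hyj : y ∈ U j),
    (chart i ⟨x, hxi⟩).2 = (chart i ⟨y, hyi⟩).2 → (chart j ⟨x, hxj⟩).2 = (chart j ⟨y, hyj⟩).2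

namespace Foliation

variable {M : Type u} [TopologicalSpace M] {p q : ℕ}

/-- The set `φᵢ⁻¹ (ℝᵖ × {y})` in the chart domain `Uᵢ`. -/
def plaqueFibre (F : Foliation M p q) (i : F.ι) (y : Fin q → ℝ) : Set M :=
  {w : M | ∃ hw : w ∈ F.U i, (F.chart i ⟨w, hw⟩).2 = y}

/-- A *plaque* of the foliation: a connected component of a set of the form
`φᵢ⁻¹ (ℝᵖ × {y})`. -/
def IsPlaque (F : Foliation M p q) (P : Set M) : Prop :=
  ∃ (i : F.ι) (y : Fin q → ℝ) (z : M), z ∈ F.plaqueFibre i y ∧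
    P = connectedComponentIn (F.plaqueFibre i y) z

/-- Two points lie in a common plaque. -/
def samePlaque (F : Foliation M p q) (x y : M) : Prop :=
  ∃ P, F.IsPlaque P ∧ x ∈ P ∧ y ∈ P

/-- The leaf relation: the smallest equivalence relation relating any two points that lie
in a common plaque. -/
def leafRel (F : Foliation M p q) : M → M → Prop := Relation.EqvGen F.samePlaque

/-- The *leaves* of the foliation: equivalence classes of the leaf relation. -/
def IsLeaf (F : Foliation M p q) (L : Set M) : Prop :=
  ∃ x : M, L = {y | F.leafRel x y}

/-- The *leaf topology* on a leaf (or any subset) `L`: the topology generated by the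
plaques contained in `L`. -/
def leafTopology (F : Foliation M p q) (L : Set M) : TopologicalSpace L :=
  TopologicalSpace.generateFrom
    {s : Set L | ∃ P, F.IsPlaque P ∧ P ⊆ L ∧ s = Subtype.val ⁻¹' P}

/-- A leaf is *long* if it is not metrisable in its leaf topology. -/
def IsLongLeaf (F : Foliation M p q) (L : Set M) : Prop :=
  F.IsLeaf L ∧ ¬ @TopologicalSpace.MetrizableSpace L (F.leafTopology L)

/-- A subset of `M` is *saturated* by the foliation if it is a union of leaves. -/
def Saturated (F : Foliation M p q) (S : Set M) : Prop :=
  ∀ x ∈ S, ∀ y, F.leafRel x y → y ∈ S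

end Foliation

/-!
Given the two cofinal sets, choose points `x₀ ≤ a₀ ≤ b₀ ≤ a₁ ≤ b₁ ≤ ⋯` with `aₙ ∈ A` and
`bₙ ∈ B`. This monotone sequence converges in `𝕃₊`, and its limit lies in both closed sets.

Convergence comes from the order: a countable set of countable ordinals is bounded in `ω₁`, and in
the lexicographic product `ω₁ ×ₗ [0,1)` every nonempty bounded set has a supremum. If the first
coordinates have a largest value `a` but the second coordinates over `a` approach `1`, that
supremum is `(a + 1, 0)`.
-/

namespace Prod.Lex

variable {α β : Type*}

section LinearOrder

variable [LinearOrder α] [LinearOrder β] {s : Set (α ×ₗ β)} {a : α} {b : β}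

theorem bddAbove_of_bddAbove_fst [NoMaxOrder α] [Nonempty β]
    (h : BddAbove ((fun x : α ×ₗ β => (ofLex x).1) '' s)) : BddAbove s := by
  obtain ⟨a, ha⟩ := h
  obtain ⟨a', haa'⟩ := exists_gt a
  obtain ⟨b⟩ := ‹Nonempty β›
  exact ⟨toLex (a', b), fun x hx =>
    le_iff.2 (.inl (show (ofLex x).1 < a' from (ha ⟨x, hx, rfl⟩).trans_lt haa'))⟩

theorem isLUB_toLex_of_isGreatest_fst (ha : IsGreatest ((fun x : α ×ₗ β => (ofLex x).1) '' s) a)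
    (hb : IsLUB {b | toLex (a, b) ∈ s} b) : IsLUB s (toLex (a, b)) := by
  refine ⟨fun x hx => le_iff'.2 ⟨ha.2 ⟨x, hx, rfl⟩, fun h => hb.1 ?_⟩, fun u hu => ?_⟩
  · change (ofLex x).1 = a at h
    change toLex (a, (ofLex x).2) ∈ s
    rwa [← h]
  · refine le_iff'.2 ⟨monotone_fst_ofLex.mem_upperBounds_image hu ha.1, fun h => ?_⟩
    exact hb.2 fun c hc => (le_iff'.1 (hu hc)).2 h

theorem isLUB_toLex_succ_bot [SuccOrder α] [NoMaxOrder α] [OrderBot β]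
    (ha : IsGreatest ((fun x : α ×ₗ β => (ofLex x).1) '' s) a)
    (hb : ¬BddAbove {b | toLex (a, b) ∈ s}) : IsLUB s (toLex (Order.succ a, ⊥)) := by
  refine ⟨fun x hx => (lt_iff.2 (Or.inl ?_)).le, fun u hu => ?_⟩
  · exact (ha.2 ⟨x, hx, rfl⟩).trans_lt (Order.lt_succ a)
  · have hau : a < (ofLex u).1 := (monotone_fst_ofLex.mem_upperBounds_image hu ha.1).lt_of_ne
      fun h => hb ⟨(ofLex u).2, fun c hc => (le_iff'.1 (hu hc)).2 h⟩
    exact le_iff'.2 ⟨Order.succ_le_of_lt hau, fun _ => bot_le⟩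

theorem isLUB_toLex_bot [OrderBot β] (ha : IsLUB ((fun x : α ×ₗ β => (ofLex x).1) '' s) a)
    (hna : a ∉ (fun x : α ×ₗ β => (ofLex x).1) '' s) : IsLUB s (toLex (a, ⊥)) :=
  ⟨fun x hx => (lt_iff'.2 ⟨ha.1 ⟨x, hx, rfl⟩, fun h => (hna ⟨x, hx, h⟩).elim⟩).le,
    fun _ hu => le_iff'.2 ⟨ha.2 (monotone_fst_ofLex.mem_upperBounds_image hu), fun _ => bot_le⟩⟩

end LinearOrder

theorem exists_isLUB [ConditionallyCompleteLinearOrder α] [SuccOrder α] [NoMaxOrder α]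
    [ConditionallyCompleteLinearOrder β] [OrderBot β] {s : Set (α ×ₗ β)} (hne : s.Nonempty)
    (hbdd : BddAbove s) : ∃ x, IsLUB s x := by
  set F := (fun x : α ×ₗ β => (ofLex x).1) '' s
  have hF : IsLUB F (sSup F) := isLUB_csSup (hne.image _) (monotone_fst_ofLex.map_bddAbove hbdd)
  by_cases hmem : sSup F ∈ F
  · by_cases hfibre : BddAbove {b | toLex (sSup F, b) ∈ s}
    · obtain ⟨x, hx, hxF⟩ := hmem
      have hne' : {b | toLex (sSup F, b) ∈ s}.Nonempty := ⟨(ofLex x).2, by rwa [← hxF]⟩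
      exact ⟨_, isLUB_toLex_of_isGreatest_fst ⟨⟨x, hx, hxF⟩, hF.1⟩ (isLUB_csSup hne' hfibre)⟩
    · exact ⟨_, isLUB_toLex_succ_bot ⟨hmem, hF.1⟩ hfibre⟩
  · exact ⟨_, isLUB_toLex_bot hF hmem⟩

end Prod.Lex

namespace Omega1

instance : WellFoundedLT Omega1 :=
  inferInstanceAs (WellFoundedLT {o : Ordinal.{0} // o < (Cardinal.aleph 1).ord})

instance : OrderBot Omega1 where
  bot := ⟨0, Cardinal.ord_pos.2 (Cardinal.aleph_pos 1)⟩
  bot_le x := Subtype.mk_le_mk.2 (zero_le (a := x.val))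

instance : ConditionallyCompleteLinearOrderBot Omega1 :=
  WellFoundedLT.conditionallyCompleteLinearOrderBot Omega1

instance : SuccOrder Omega1 := .ofLinearWellFoundedLT Omega1

instance : NoMaxOrder Omega1 where
  exists_gt x := ⟨⟨Order.succ x.val,
    (Cardinal.isSuccLimit_ord (Cardinal.aleph0_le_aleph 1)).succ_lt x.2⟩, Order.lt_succ x.val⟩

theorem bddAbove_of_countable {s : Set Omega1} (hs : s.Countable) : BddAbove s := by
  have := hs.to_subtype
  have hlt : ⨆ x : s, x.1.toOrdinal < (Cardinal.aleph 1).ord := by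
    rw [Cardinal.ord_aleph]
    exact Ordinal.iSup_lt_omega_one fun x => (Cardinal.ord_aleph 1) ▸ x.1.2
  exact ⟨⟨_, hlt⟩, fun x hx => Ordinal.le_iSup (fun x : s => x.1.toOrdinal) ⟨x, hx⟩⟩

end Omega1

namespace ClosedLongRay

theorem exists_isLUB_of_countable {s : Set ClosedLongRay} (hs : s.Countable)
    (hne : s.Nonempty) : ∃ x, IsLUB s x := by
  have : Fact ((0 : ℝ) < 1) := ⟨one_pos⟩
  let : Inhabited (Set.Ico (0 : ℝ) 1) := ⟨⊥⟩
  refine Prod.Lex.exists_isLUB (α := Omega1) (β := Set.Ico (0 : ℝ) 1) hne ?_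
  exact Prod.Lex.bddAbove_of_bddAbove_fst (Omega1.bddAbove_of_countable (hs.image _))

end ClosedLongRay

namespace LongRay

instance : Nonempty LongRay :=
  let x : ClosedLongRay := toLex (⊥, ⟨0, le_rfl, one_pos⟩)
  have : NoMaxOrder ClosedLongRay := Prod.Lex.noMaxOrder_of_left
  ⟨⟨(exists_gt x).choose, x, (exists_gt x).choose_spec⟩⟩

theorem exists_tendsto_of_monotone {x : ℕ → LongRay} (hx : Monotone x) :
    ∃ l, Tendsto x atTop (𝓝 l) := by
  have hx' : Monotone fun n => (x n).toCLR := hx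
  obtain ⟨L, hL⟩ := ClosedLongRay.exists_isLUB_of_countable
    (countable_range fun n => (x n).toCLR) (range_nonempty _)
  obtain ⟨y, hy⟩ := (x 0).2
  exact ⟨⟨L, y, hy.trans_le (hL.1 ⟨0, rfl⟩)⟩, tendsto_subtype_rng.2 (tendsto_atTop_isLUB hx' hL)⟩

end LongRay

theorem exists_monotone_alternating {X : Type*} [Preorder X] [Nonempty X] {A B : Set X}
    (hA : ∀ x, ∃ a ∈ A, x ≤ a) (hB : ∀ x, ∃ b ∈ B, x ≤ b) :
    ∃ u : ℕ → X, Monotone u ∧ ∀ n, u (2 * n) ∈ A ∧ u (2 * n + 1) ∈ B := by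
  choose f hfA hf using hA
  choose g hgB hg using hB
  let u : ℕ → X := fun n =>
    Nat.rec (f (Classical.arbitrary X)) (fun k uk => if Even k then g uk else f uk) n
  have hu : ∀ n, u (n + 1) = if Even n then g (u n) else f (u n) := fun _ => rfl
  refine ⟨u, monotone_nat_of_le_succ fun n => ?_, fun n => ⟨?_, ?_⟩⟩
  · rw [hu]
    split_ifs
    exacts [hg _, hf _]
  · cases n with
    | zero => exact hfA _
    | succ k => rw [show 2 * (k + 1) = 2 * k + 1 + 1 by ring, hu, if_neg (by simp)]; exact hfA _
  · rw [hu, if_pos (even_two_mul n)]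
    exact hgB _

theorem inter_nonempty_of_isClosed_of_cofinal {X : Type*} [Preorder X] [TopologicalSpace X]
    [Nonempty X] (hconv : ∀ u : ℕ → X, Monotone u → ∃ l, Tendsto u atTop (𝓝 l)) {A B : Set X}
    (hA : IsClosed A) (hB : IsClosed B) (hAu : ∀ x, ∃ a ∈ A, x ≤ a) (hBu : ∀ x, ∃ b ∈ B, x ≤ b) :
    (A ∩ B).Nonempty := by
  obtain ⟨u, hu, huAB⟩ := exists_monotone_alternating hAu hBu
  obtain ⟨l, hl⟩ := hconv u hu
  have heven : Tendsto (fun n => 2 * n) atTop atTop :=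
    tendsto_atTop_mono (fun n => show n ≤ _ by omega) tendsto_id
  have hodd : Tendsto (fun n => 2 * n + 1) atTop atTop :=
    tendsto_atTop_mono (fun n => show n ≤ _ by omega) tendsto_id
  exact ⟨l, hA.mem_of_tendsto (hl.comp heven) (.of_forall fun n => (huAB n).1),
    hB.mem_of_tendsto (hl.comp hodd) (.of_forall fun n => (huAB n).2)⟩

/-- Two closed unbounded subsets of the long ray `𝕃₊` intersect. -/
theorem statement18 (A B : Set LongRay) (hA : IsClosed A) (hB : IsClosed B)
    (hAu : ∀ β : LongRay, ∃ α ∈ A, β ≤ α) (hBu : ∀ β : LongRay, ∃ α ∈ B, β ≤ α) :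
    (A ∩ B).Nonempty :=
  inter_nonempty_of_isClosed_of_cofinal (fun _ => LongRay.exists_tendsto_of_monotone) hA hB hAu hBu
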